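/- Let A and M be vector spaces over a field K of characteristic 0. Let f̂ : (A⊕M)^{⊗(m+1)} → A⊕M be the horizontal lift of a family consisting of a multilinear map f_A : A^{⊗(m+1)} → A together with, for each position j (1 ≤ j ≤ m+1), a multilinear map f_{M,j} : A^{⊗(j−1)} ⊗ M ⊗ A^{⊗(m+1−j)} → M; let ĝ : (A⊕M)^{⊗(n+1)} → A⊕M be the horizontal lift of an analogous family (g_A, g_{M,1},…,g_{M,n+1}). Then the Gerstenhaber bracket [f̂, ĝ] is again such a horizontal lift: on a tensor all of whose factors lie in the summand A of A⊕M, [f̂,ĝ] takes values in A; on a tensor exactly one of whose factors lies in the summand M, it takes values in M; and it vanishes on every tensor having at least two factors in M. (Equivalently, the space of such bidegree k|0 maps is a graded Lie subalgebra under the Gerstenhaber bracket.) -/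
import Mathlib


/-!
Statement 1: multilinear maps on `A ⊕ M` of bidegree `k|0` (values in `A` on purely-`A`
tensors, values in `M` on tensors with exactly one `M`-factor, vanishing on tensors with at
least two `M`-factors) form a graded Lie subalgebra under the Gerstenhaber bracket.
-/

section

variable {K : Type*} [Field K] [CharZero K]
variable (A M : Type*) [AddCommGroup A] [Module K A] [AddCommGroup M] [Module K M]

/-- The Gerstenhaber circle product `f ⋄ g` of (set-level) cochains. -/
def gCirc {V : Type*} [AddCommGroup V] (m n : ℕ)
    (f : (Fin (m+1) → V) → V) (g : (Fin (n+1) → V) → V) :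
    (Fin (m+n+1) → V) → V :=
  fun v => ∑ i : Fin (m+1), ((-1 : ℤ) ^ ((i : ℕ) * n)) •
    f (fun j =>
      if (j : ℕ) < (i : ℕ) then v ⟨(j : ℕ), by have := j.isLt; omega⟩
      else if (j : ℕ) = (i : ℕ) then
        g (fun k => v ⟨(i : ℕ) + (k : ℕ), by have := i.isLt; have := k.isLt; omega⟩)
      else v ⟨(j : ℕ) + n, by have := j.isLt; omega⟩)

/-- The Gerstenhaber bracket `[f,g] = f ⋄ g − (−1)^{mn} g ⋄ f`. -/
def gBracket {V : Type*} [AddCommGroup V] (m n : ℕ)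
    (f : (Fin (m+1) → V) → V) (g : (Fin (n+1) → V) → V) :
    (Fin (m+n+1) → V) → V :=
  fun v => gCirc m n f g v
    - ((-1 : ℤ) ^ (m * n)) • gCirc n m g f (fun j => v (Fin.cast (by omega) j))

/-- A pure tensor in `(A ⊕ M)^{⊗k}`: the factors indexed by `S` lie in the summand `M`, the
remaining factors lie in the summand `A`. -/
def pureTensor (k : ℕ) (S : Finset (Fin k)) (a : Fin k → A) (w : Fin k → M) :
    Fin k → A × M :=
  fun i => if i ∈ S then ((0 : A), w i) else (a i, (0 : M))

/-- A map `(A ⊕ M)^{⊗k} → A ⊕ M` is a horizontal lift of a family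
`(f_A, f_{M,1}, …, f_{M,k})` (i.e. has bidegree `(k-1)|0`) precisely when: on a tensor all
of whose factors lie in `A` it takes values in `A`; on a tensor with exactly one factor in
`M` it takes values in `M`; and it vanishes on tensors with at least two factors in `M`. -/
def HasBidegreeZero (k : ℕ) (F : (Fin k → A × M) → A × M) : Prop :=
  ∀ (S : Finset (Fin k)) (a : Fin k → A) (w : Fin k → M),
    (S.card = 0 → (F (pureTensor A M k S a w)).2 = 0) ∧
    (S.card = 1 → (F (pureTensor A M k S a w)).1 = 0) ∧
    (2 ≤ S.card → F (pureTensor A M k S a w) = 0)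

set_option linter.unusedSectionVars false in
private lemma zsmul_snd' (c : ℤ) (x : A × M) : (c • x).2 = c • x.2 := rfl
private lemma zsmul_fst' (c : ℤ) (x : A × M) : (c • x).1 = c • x.1 := rfl

private lemma term_bidegree (m n : ℕ)
    (F : MultilinearMap K (fun _ : Fin (m+1) => A × M) (A × M))
    (G : MultilinearMap K (fun _ : Fin (n+1) => A × M) (A × M))
    (hF : HasBidegreeZero A M (m+1) (fun v => F v))
    (hG : HasBidegreeZero A M (n+1) (fun v => G v))
    (i : Fin (m+1)) (S : Finset (Fin (m+n+1)))
    (a : Fin (m+n+1) → A) (w : Fin (m+n+1) → M)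
    (vF : Fin (m+1) → A × M)
    (harg : vF = fun j : Fin (m+1) =>
      if (j : ℕ) < (i : ℕ) then pureTensor A M (m+n+1) S a w ⟨(j : ℕ), by have := j.isLt; omega⟩
      else if (j : ℕ) = (i : ℕ) then
        G (fun k : Fin (n+1) => pureTensor A M (m+n+1) S a w
          ⟨(i : ℕ) + (k : ℕ), by have := i.isLt; have := k.isLt; omega⟩)
      else pureTensor A M (m+n+1) S a w ⟨(j : ℕ) + n, by have := j.isLt; omega⟩) :
    (S.card = 0 → (F vF).2 = 0) ∧ (S.card = 1 → (F vF).1 = 0) ∧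
      (2 ≤ S.card → F vF = 0) := by
  classical
  have him : (i : ℕ) < m + 1 := i.isLt
  have hin : ∀ k : Fin (n+1), (i : ℕ) + (k : ℕ) < m+n+1 := fun k => by
    have := k.isLt; omega
  set Swin : Finset (Fin (n+1)) :=
    Finset.univ.filter (fun k => (⟨(i : ℕ) + (k : ℕ), hin k⟩ : Fin (m+n+1)) ∈ S) with hSwin
  set g0 : A × M := G (pureTensor A M (n+1) Swin
      (fun k => a ⟨(i : ℕ) + (k : ℕ), hin k⟩)
      (fun k => w ⟨(i : ℕ) + (k : ℕ), hin k⟩)) with hg0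
  have hwin : (fun k : Fin (n+1) => pureTensor A M (m+n+1) S a w ⟨(i : ℕ) + (k : ℕ), hin k⟩)
      = pureTensor A M (n+1) Swin
        (fun k => a ⟨(i : ℕ) + (k : ℕ), hin k⟩)
        (fun k => w ⟨(i : ℕ) + (k : ℕ), hin k⟩) := by
    funext k
    have hmem : k ∈ Swin ↔ (⟨(i : ℕ) + (k : ℕ), hin k⟩ : Fin (m+n+1)) ∈ S := by
      simp [hSwin]
    simp only [pureTensor]
    by_cases hk : (⟨(i : ℕ) + (k : ℕ), hin k⟩ : Fin (m+n+1)) ∈ S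
    · rw [if_pos hk, if_pos (hmem.mpr hk)]
    · rw [if_neg hk, if_neg (fun h => hk (hmem.mp h))]
  have hg00 : Swin.card = 0 → g0.2 = 0 := fun h => by
    rw [hg0]; exact (hG Swin _ _).1 h
  have hg01 : Swin.card = 1 → g0.1 = 0 := fun h => by
    rw [hg0]; exact (hG Swin _ _).2.1 h
  have hg02 : 2 ≤ Swin.card → g0 = 0 := fun h => by
    rw [hg0]; exact (hG Swin _ _).2.2 h
  have hvFi : vF i = g0 := by
    rw [harg]
    simp only [lt_irrefl, if_false, if_pos rfl]
    rw [hg0]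
    exact congrArg G hwin
  have hwincard : Swin.card
      = (S.filter (fun t : Fin (m+n+1) => (i:ℕ) ≤ (t:ℕ) ∧ (t:ℕ) ≤ (i:ℕ) + n)).card := by
    apply Finset.card_bij (fun (k : Fin (n+1)) (_ : k ∈ Swin) => (⟨(i:ℕ)+(k:ℕ), hin k⟩ : Fin (m+n+1)))
    · intro k hk
      rw [hSwin] at hk
      simp only [Finset.mem_filter, Finset.mem_univ, true_and] at hk
      simp only [Finset.mem_filter]
      have hkn := k.isLt
      exact ⟨hk, by show (i:ℕ) ≤ (i:ℕ)+(k:ℕ); omega, by show (i:ℕ)+(k:ℕ) ≤ (i:ℕ)+n; omega⟩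
    · intro k1 h1 k2 h2 h
      have hvv : (i:ℕ)+(k1:ℕ) = (i:ℕ)+(k2:ℕ) := congrArg Fin.val h
      exact Fin.ext (by omega)
    · intro t ht
      simp only [Finset.mem_filter] at ht
      obtain ⟨htS, hle, hle2⟩ := ht
      have hk : (t:ℕ) - (i:ℕ) < n+1 := by omega
      refine ⟨⟨(t:ℕ)-(i:ℕ), hk⟩, ?_, ?_⟩
      · rw [hSwin]; simp only [Finset.mem_filter, Finset.mem_univ, true_and]
        have he : (⟨(i:ℕ)+((t:ℕ)-(i:ℕ)), by have := t.isLt; omega⟩ : Fin (m+n+1)) = t := by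
          apply Fin.ext
          show (i:ℕ)+((t:ℕ)-(i:ℕ)) = (t:ℕ)
          omega
        rw [he]; exact htS
      · apply Fin.ext
        show (i:ℕ)+((t:ℕ)-(i:ℕ)) = (t:ℕ)
        omega
  set Sout : Finset (Fin (m+n+1)) :=
    S.filter (fun t : Fin (m+n+1) => ¬((i:ℕ) ≤ (t:ℕ) ∧ (t:ℕ) ≤ (i:ℕ) + n)) with hSout
  have hsplit : Swin.card + Sout.card = S.card := by
    rw [hwincard, hSout]
    exact Finset.card_filter_add_card_filter_not _
  set a' : Fin (m+1) → A := fun j : Fin (m+1) =>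
    if h : (j:ℕ) < (i:ℕ) then a ⟨(j:ℕ), by omega⟩
    else if (j:ℕ) = (i:ℕ) then g0.1
    else a ⟨(j:ℕ)+n, by have := j.isLt; omega⟩ with ha'
  set w' : Fin (m+1) → M := fun j : Fin (m+1) =>
    if h : (j:ℕ) < (i:ℕ) then w ⟨(j:ℕ), by omega⟩
    else if (j:ℕ) = (i:ℕ) then g0.2
    else w ⟨(j:ℕ)+n, by have := j.isLt; omega⟩ with hw'
  set S' : Finset (Fin (m+1)) := Finset.univ.filter (fun j : Fin (m+1) =>
    if h : (j:ℕ) < (i:ℕ) then (⟨(j:ℕ), by omega⟩ : Fin (m+n+1)) ∈ S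
    else if (j:ℕ) = (i:ℕ) then Swin.card = 1
    else (⟨(j:ℕ)+n, by have := j.isLt; omega⟩ : Fin (m+n+1)) ∈ S) with hS'
  have hmemi : i ∈ S' ↔ Swin.card = 1 := by
    rw [hS']
    simp only [Finset.mem_filter, Finset.mem_univ, true_and]
    rw [dif_neg (lt_irrefl ((i:ℕ)))]
    simp
  have harg2 : Swin.card ≤ 1 → vF = pureTensor A M (m+1) S' a' w' := by
    intro hsin
    rw [harg]
    funext j
    by_cases h1 : (j:ℕ) < (i:ℕ)
    · rw [if_pos h1]
      have hj : (j ∈ S') ↔ ((⟨(j:ℕ), by omega⟩ : Fin (m+n+1)) ∈ S) := by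
        rw [hS']; simp only [Finset.mem_filter, Finset.mem_univ, true_and]
        rw [dif_pos h1]
      have ha'j : a' j = a ⟨(j:ℕ), by omega⟩ := by
        simp only [ha']; rw [dif_pos h1]
      have hw'j : w' j = w ⟨(j:ℕ), by omega⟩ := by
        simp only [hw']; rw [dif_pos h1]
      simp only [pureTensor]
      by_cases hjS : (⟨(j:ℕ), by omega⟩ : Fin (m+n+1)) ∈ S
      · rw [if_pos hjS, if_pos (hj.mpr hjS), hw'j]
      · rw [if_neg hjS, if_neg (fun hh => hjS (hj.mp hh)), ha'j]
    · rw [if_neg h1]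
      by_cases h2 : (j:ℕ) = (i:ℕ)
      · rw [if_pos h2]
        have hji : j = i := Fin.ext h2
        have hLHS : G (fun k : Fin (n+1) => pureTensor A M (m+n+1) S a w ⟨(i:ℕ)+(k:ℕ), hin k⟩) = g0 := by
          rw [hg0]; exact congrArg G hwin
        refine hLHS.trans ?_
        have hj : (j ∈ S') ↔ Swin.card = 1 := by rw [hji]; exact hmemi
        have ha'j : a' j = g0.1 := by
          simp only [ha']; rw [dif_neg h1, if_pos h2]
        have hw'j : w' j = g0.2 := by
          simp only [hw']; rw [dif_neg h1, if_pos h2]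
        simp only [pureTensor]
        rcases Nat.le_one_iff_eq_zero_or_eq_one.mp hsin with h0 | h1'
        · rw [if_neg (fun hh => by have := hj.mp hh; omega), ha'j, ← hg00 h0]
        · rw [if_pos (hj.mpr h1'), hw'j, ← hg01 h1']
      · rw [if_neg h2]
        have hj : (j ∈ S') ↔ ((⟨(j:ℕ)+n, by have := j.isLt; omega⟩ : Fin (m+n+1)) ∈ S) := by
          rw [hS']; simp only [Finset.mem_filter, Finset.mem_univ, true_and]
          rw [dif_neg h1, if_neg h2]
        have ha'j : a' j = a ⟨(j:ℕ)+n, by have := j.isLt; omega⟩ := by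
          simp only [ha']; rw [dif_neg h1, if_neg h2]
        have hw'j : w' j = w ⟨(j:ℕ)+n, by have := j.isLt; omega⟩ := by
          simp only [hw']; rw [dif_neg h1, if_neg h2]
        simp only [pureTensor]
        by_cases hjS : (⟨(j:ℕ)+n, by have := j.isLt; omega⟩ : Fin (m+n+1)) ∈ S
        · rw [if_pos hjS, if_pos (hj.mpr hjS), hw'j]
        · rw [if_neg hjS, if_neg (fun hh => hjS (hj.mp hh)), ha'j]
  have hcardi : (S'.filter (fun j : Fin (m+1) => (j:ℕ) = (i:ℕ))).card
      = (if Swin.card = 1 then 1 else 0) := by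
    have he : S'.filter (fun j : Fin (m+1) => (j:ℕ) = (i:ℕ))
        = (if Swin.card = 1 then {i} else ∅) := by
      ext j
      simp only [Finset.mem_filter]
      split_ifs with hc
      · simp only [Finset.mem_singleton]
        constructor
        · rintro ⟨-, hji⟩; exact Fin.ext hji
        · rintro rfl; exact ⟨hmemi.mpr hc, rfl⟩
      · simp only [Finset.notMem_empty, iff_false, not_and]
        intro hjS' hji
        have hji' : j = i := Fin.ext hji
        rw [hji'] at hjS'
        exact hc (hmemi.mp hjS')
    rw [he]
    split_ifs <;> simp
  have hcardrest : (S'.filter (fun j : Fin (m+1) => ¬((j:ℕ) = (i:ℕ)))).card = Sout.card := by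
    apply Finset.card_bij (fun (j : Fin (m+1)) (_ : j ∈ S'.filter (fun j : Fin (m+1) => ¬((j:ℕ) = (i:ℕ)))) =>
      if h : (j:ℕ) < (i:ℕ) then (⟨(j:ℕ), by omega⟩ : Fin (m+n+1))
      else (⟨(j:ℕ)+n, by have := j.isLt; omega⟩ : Fin (m+n+1)))
    · intro j hj
      simp only [Finset.mem_filter] at hj
      obtain ⟨hjS', hjne⟩ := hj
      rw [hS'] at hjS'
      simp only [Finset.mem_filter, Finset.mem_univ, true_and] at hjS'
      rw [hSout]
      simp only [Finset.mem_filter]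
      by_cases h1 : (j:ℕ) < (i:ℕ)
      · rw [dif_pos h1] at hjS' ⊢
        exact ⟨hjS', by simp only [Fin.val_mk]; omega⟩
      · rw [dif_neg h1] at hjS' ⊢
        rw [if_neg hjne] at hjS'
        refine ⟨hjS', ?_⟩
        simp only [Fin.val_mk]
        omega
    · intro j1 hj1 j2 hj2 h
      apply Fin.ext
      by_cases h1 : (j1:ℕ) < (i:ℕ) <;> by_cases h2 : (j2:ℕ) < (i:ℕ)
      · rw [dif_pos h1, dif_pos h2] at h
        have := congrArg Fin.val h; simp only [Fin.val_mk] at this; omega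
      · rw [dif_pos h1, dif_neg h2] at h
        have := congrArg Fin.val h; simp only [Fin.val_mk] at this
        simp only [Finset.mem_filter] at hj2
        have : (j2:ℕ) ≠ (i:ℕ) := hj2.2
        omega
      · rw [dif_neg h1, dif_pos h2] at h
        have := congrArg Fin.val h; simp only [Fin.val_mk] at this
        simp only [Finset.mem_filter] at hj1
        have : (j1:ℕ) ≠ (i:ℕ) := hj1.2
        omega
      · rw [dif_neg h1, dif_neg h2] at h
        have := congrArg Fin.val h; simp only [Fin.val_mk] at this; omega
    · intro t ht
      rw [hSout] at ht
      simp only [Finset.mem_filter] at ht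
      obtain ⟨htS, htP⟩ := ht
      push_neg at htP
      by_cases h1 : (t:ℕ) < (i:ℕ)
      · refine ⟨⟨(t:ℕ), by omega⟩, ?_, ?_⟩
        · simp only [Finset.mem_filter]
          constructor
          · rw [hS']
            simp only [Finset.mem_filter, Finset.mem_univ, true_and]
            rw [dif_pos (show ((⟨(t:ℕ), by omega⟩ : Fin (m+1)) : ℕ) < (i:ℕ) from h1)]
            have he : (⟨(t:ℕ), by omega⟩ : Fin (m+n+1)) = t := Fin.ext rfl
            rw [he]; exact htS
          · show ¬((t:ℕ) = (i:ℕ)); omega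
        · exact Fin.ext (by rw [dif_pos (show ((⟨(t:ℕ), by omega⟩ : Fin (m+1)) : ℕ) < (i:ℕ) from h1)])
      · have hgt : (i:ℕ) + n < (t:ℕ) := by
          have := htP (by omega)
          omega
        have htlt := t.isLt
        refine ⟨⟨(t:ℕ)-n, by omega⟩, ?_, ?_⟩
        · simp only [Finset.mem_filter]
          constructor
          · rw [hS']
            simp only [Finset.mem_filter, Finset.mem_univ, true_and]
            rw [dif_neg (show ¬(((⟨(t:ℕ)-n, by omega⟩ : Fin (m+1)) : ℕ) < (i:ℕ)) from by
              simp only [Fin.val_mk]; omega)]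
            rw [if_neg (show ¬(((⟨(t:ℕ)-n, by omega⟩ : Fin (m+1)) : ℕ) = (i:ℕ)) from by
              simp only [Fin.val_mk]; omega)]
            have he : (⟨((⟨(t:ℕ)-n, by omega⟩ : Fin (m+1)) : ℕ)+n, by omega⟩ : Fin (m+n+1)) = t := by
              apply Fin.ext
              show (t:ℕ)-n+n = (t:ℕ)
              omega
            rw [he]; exact htS
          · show ¬((t:ℕ)-n = (i:ℕ)); omega
        · rw [dif_neg (show ¬(((⟨(t:ℕ)-n, by omega⟩ : Fin (m+1)) : ℕ) < (i:ℕ)) from by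
            simp only [Fin.val_mk]; omega)]
          apply Fin.ext
          show (t:ℕ)-n+n = (t:ℕ)
          omega
  have hcardS' : Swin.card ≤ 1 → S'.card = S.card := by
    intro hsin
    have hsplit' : (S'.filter (fun j : Fin (m+1) => (j:ℕ) = (i:ℕ))).card
        + (S'.filter (fun j : Fin (m+1) => ¬((j:ℕ) = (i:ℕ)))).card = S'.card :=
      Finset.card_filter_add_card_filter_not _
    rw [hcardi, hcardrest] at hsplit'
    rcases Nat.le_one_iff_eq_zero_or_eq_one.mp hsin with h0 | h1
    · rw [if_neg (by omega)] at hsplit'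
      omega
    · rw [if_pos h1] at hsplit'
      omega
  refine ⟨?_, ?_, ?_⟩
  · intro h0
    have hsin : Swin.card ≤ 1 := by omega
    rw [harg2 hsin]
    exact (hF S' a' w').1 (by rw [hcardS' hsin]; exact h0)
  · intro h1
    have hsin : Swin.card ≤ 1 := by omega
    rw [harg2 hsin]
    exact (hF S' a' w').2.1 (by rw [hcardS' hsin]; exact h1)
  · intro h2
    by_cases hsin : Swin.card ≤ 1
    · rw [harg2 hsin]
      exact (hF S' a' w').2.2 (by rw [hcardS' hsin]; exact h2)
    · have : vF i = 0 := hvFi.trans (hg02 (by omega))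
      exact F.map_coord_zero i this

private lemma gCirc_bidegree (m n : ℕ)
    (F : MultilinearMap K (fun _ : Fin (m+1) => A × M) (A × M))
    (G : MultilinearMap K (fun _ : Fin (n+1) => A × M) (A × M))
    (hF : HasBidegreeZero A M (m+1) (fun v => F v))
    (hG : HasBidegreeZero A M (n+1) (fun v => G v)) :
    HasBidegreeZero A M (m+n+1) (gCirc m n (fun v => F v) (fun v => G v)) := by
  intro S a w
  have hterm := fun i : Fin (m+1) =>
    term_bidegree A M m n F G hF hG i S a w _ rfl
  refine ⟨?_, ?_, ?_⟩
  · intro h0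
    simp only [gCirc]
    rw [Prod.snd_sum]
    apply Finset.sum_eq_zero
    intro i _
    rw [zsmul_snd']
    exact smul_eq_zero_of_right _ ((hterm i).1 h0)
  · intro h1
    simp only [gCirc]
    rw [Prod.fst_sum]
    apply Finset.sum_eq_zero
    intro i _
    rw [zsmul_fst']
    exact smul_eq_zero_of_right _ ((hterm i).2.1 h1)
  · intro h2
    simp only [gCirc]
    apply Finset.sum_eq_zero
    intro i _
    exact smul_eq_zero_of_right _ ((hterm i).2.2 h2)

private lemma pureTensor_cast (k k' : ℕ) (h : k' = k) (S : Finset (Fin k))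
    (a : Fin k → A) (w : Fin k → M) :
    (fun j : Fin k' => pureTensor A M k S a w (Fin.cast h j))
      = pureTensor A M k' (S.map (finCongr h.symm).toEmbedding)
          (fun j => a (Fin.cast h j)) (fun j => w (Fin.cast h j)) := by
  funext j
  have hmem : Fin.cast h j ∈ S ↔ j ∈ S.map (finCongr h.symm).toEmbedding := by
    simp only [Finset.mem_map, Equiv.coe_toEmbedding, finCongr_apply]
    constructor
    · intro hj; exact ⟨Fin.cast h j, hj, Fin.ext rfl⟩
    · rintro ⟨t, ht, rfl⟩
      have he : Fin.cast h (Fin.cast h.symm t) = t := Fin.ext rfl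
      rwa [he]
  simp only [pureTensor]
  by_cases hj : Fin.cast h j ∈ S
  · rw [if_pos hj, if_pos (hmem.mp hj)]
  · rw [if_neg hj, if_neg (fun hh => hj (hmem.mpr hh))]

/-- If `F` and `G` are multilinear maps on `A ⊕ M` of bidegree `m|0` and `n|0`
respectively, then their Gerstenhaber bracket again has bidegree `(m+n)|0`. -/
theorem statement1 (m n : ℕ)
    (F : MultilinearMap K (fun _ : Fin (m+1) => A × M) (A × M))
    (G : MultilinearMap K (fun _ : Fin (n+1) => A × M) (A × M))
    (hF : HasBidegreeZero A M (m+1) (fun v => F v))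
    (hG : HasBidegreeZero A M (n+1) (fun v => G v)) :
    HasBidegreeZero A M (m+n+1) (gBracket m n (fun v => F v) (fun v => G v)) := by
  classical
  intro S a w
  have hmn : n + m + 1 = m + n + 1 := by omega
  have hcast := pureTensor_cast A M (m+n+1) (n+m+1) hmn S a w
  have hCG := gCirc_bidegree A M m n F G hF hG S a w
  have hGF := gCirc_bidegree A M n m G F hG hF
    (S.map (finCongr hmn.symm).toEmbedding)
    (fun j => a (Fin.cast hmn j)) (fun j => w (Fin.cast hmn j))
  rw [← hcast] at hGF
  have hS2card : (S.map (finCongr hmn.symm).toEmbedding).card = S.card := Finset.card_map _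
  rw [hS2card] at hGF
  refine ⟨?_, ?_, ?_⟩
  · intro h0
    show (gCirc m n (fun v => F v) (fun v => G v) (pureTensor A M (m+n+1) S a w)
      - ((-1:ℤ)^(m*n)) • gCirc n m (fun v => G v) (fun v => F v)
          (fun j => pureTensor A M (m+n+1) S a w (Fin.cast hmn j))).2 = 0
    have e1 := hCG.1 h0
    have e2 := hGF.1 h0
    rw [Prod.snd_sub, e1, zsmul_snd', e2, smul_zero, sub_zero]
  · intro h1
    show (gCirc m n (fun v => F v) (fun v => G v) (pureTensor A M (m+n+1) S a w)
      - ((-1:ℤ)^(m*n)) • gCirc n m (fun v => G v) (fun v => F v)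
          (fun j => pureTensor A M (m+n+1) S a w (Fin.cast hmn j))).1 = 0
    have e1 := hCG.2.1 h1
    have e2 := hGF.2.1 h1
    rw [Prod.fst_sub, e1, zsmul_fst', e2, smul_zero, sub_zero]
  · intro h2
    show (gCirc m n (fun v => F v) (fun v => G v) (pureTensor A M (m+n+1) S a w)
      - ((-1:ℤ)^(m*n)) • gCirc n m (fun v => G v) (fun v => F v)
          (fun j => pureTensor A M (m+n+1) S a w (Fin.cast hmn j))) = 0
    have e1 := hCG.2.2 h2
    have e2 := hGF.2.2 h2
    rw [e1, e2, smul_zero, sub_zero]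

end
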